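/- arXiv:2002.07932 — 8 statements merged into one kernel-verified Lean document; each statement's English description precedes it below -/
import Mathlib

section
/- Let {v_n} be a sequence of monic complex polynomials with deg v_n = n. Let g : ℕ → ℂ with g_0 = 0 and let h : ℕ → ℂ be injective. Let γ and φ be the ℂ-linear operators on ℂ[t] determined on the basis {v_n} by γ v_0 = 0, γ v_k = g_k v_{k-1} for k ≥ 1, and φ v_k = h_k v_k for k ≥ 0. Then for every n ≥ 0 the monic polynomial u_n(t) = Σ_{k=0}^{n} c_{n,k} v_k(t), where c_{n,k} = ∏_{j=k}^{n-1} g_{j+1}/(h_n − h_j) for 0 ≤ k ≤ n−1 and c_{n,n} = 1, satisfies the generalized difference equation γ u_n + φ u_n = h_n u_n. -/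
/-!
In the basis `v`, the operator `γ + φ` is upper bidiagonal, so `∑ c_k v_k` is an eigenvector for
the eigenvalue `h_n` as soon as `c_k (h_n - h_k) = g_{k+1} c_{k+1}` for `k < n`.
The product coefficients solve this two-term recurrence by peeling off their first factor,
whose denominator `h_n - h_k` is nonzero because `h` is injective.
-/

open Finset

section Bidiagonal

variable {R M : Type*} [CommRing R] [AddCommGroup M] [Module R M]

theorem map_sum_range_smul_of_lowering (γ : M →ₗ[R] M) (v : ℕ → M) (g c : ℕ → R)
    (hγ0 : γ (v 0) = 0) (hγ : ∀ k, γ (v (k + 1)) = g (k + 1) • v k) (n : ℕ) :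
    γ (∑ k ∈ range (n + 1), c k • v k) = ∑ k ∈ range n, (c (k + 1) * g (k + 1)) • v k := by
  rw [sum_range_succ', map_add, map_sum]
  simp only [map_smul, hγ, hγ0, smul_zero, add_zero, smul_smul, mul_comm]

theorem map_sum_smul_of_diagonal (φ : M →ₗ[R] M) (v : ℕ → M) (h c : ℕ → R)
    (hφ : ∀ k, φ (v k) = h k • v k) (s : Finset ℕ) :
    φ (∑ k ∈ s, c k • v k) = ∑ k ∈ s, (c k * h k) • v k := by
  simp only [map_sum, map_smul, hφ, smul_smul]

theorem lowering_add_diagonal_sum_eq_smul (γ φ : M →ₗ[R] M) (v : ℕ → M) (g h c : ℕ → R)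
    (hγ0 : γ (v 0) = 0) (hγ : ∀ k, γ (v (k + 1)) = g (k + 1) • v k)
    (hφ : ∀ k, φ (v k) = h k • v k) (n : ℕ)
    (hrec : ∀ k < n, c k * (h n - h k) = c (k + 1) * g (k + 1)) :
    γ (∑ k ∈ range (n + 1), c k • v k) + φ (∑ k ∈ range (n + 1), c k • v k) =
      h n • ∑ k ∈ range (n + 1), c k • v k := by
  rw [map_sum_range_smul_of_lowering γ v g c hγ0 hγ, map_sum_smul_of_diagonal φ v h c hφ,
    smul_sum, sum_range_succ _ n, sum_range_succ _ n, ← add_assoc, ← sum_add_distrib]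
  simp only [smul_smul, ← add_smul]
  congr 1
  · exact sum_congr rfl fun k hk => congrArg (· • v k) <| by
      linear_combination -hrec k (mem_range.mp hk)
  · rw [mul_comm]

end Bidiagonal

theorem prod_Ico_div_sub_mul_sub {K : Type*} [Field K] (g h : ℕ → K) {k n : ℕ} (hk : k < n)
    (hne : h n ≠ h k) :
    (∏ j ∈ Ico k n, g (j + 1) / (h n - h j)) * (h n - h k) =
      (∏ j ∈ Ico (k + 1) n, g (j + 1) / (h n - h j)) * g (k + 1) := by
  rw [prod_eq_prod_Ico_succ_bot hk, mul_right_comm, mul_comm,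
    div_mul_cancel₀ _ (sub_ne_zero.mpr hne)]

theorem stmt0_general (v : ℕ → Polynomial ℂ)
    (g h : ℕ → ℂ) (hinj : Function.Injective h)
    (γ φ : Polynomial ℂ →ₗ[ℂ] Polynomial ℂ)
    (hγ0 : γ (v 0) = 0) (hγ : ∀ k : ℕ, γ (v (k + 1)) = g (k + 1) • v k)
    (hφ : ∀ k : ℕ, φ (v k) = h k • v k)
    (u : ℕ → Polynomial ℂ)
    (hu : ∀ n, u n = ∑ k ∈ Finset.range (n + 1),
      (∏ j ∈ Finset.Ico k n, g (j + 1) / (h n - h j)) • v k) :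
    ∀ n, γ (u n) + φ (u n) = h n • u n := by
  intro n
  rw [hu n]
  refine lowering_add_diagonal_sum_eq_smul γ φ v g h _ hγ0 hγ hφ n fun k hk => ?_
  exact prod_Ico_div_sub_mul_sub g h hk (hinj.ne hk.ne')

/-- the monic polynomials `u n` built from the coefficients
`c n k = ∏_{j=k}^{n-1} g_{j+1}/(h n − h j)` satisfy the generalized
difference equation `γ u_n + φ u_n = h_n • u_n`. -/
theorem stmt0 (v : ℕ → Polynomial ℂ)
    (hmonic : ∀ n, (v n).Monic) (hdeg : ∀ n, (v n).natDegree = n)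
    (g h : ℕ → ℂ) (hg0 : g 0 = 0) (hinj : Function.Injective h)
    (γ φ : Polynomial ℂ →ₗ[ℂ] Polynomial ℂ)
    (hγ0 : γ (v 0) = 0) (hγ : ∀ k : ℕ, γ (v (k + 1)) = g (k + 1) • v k)
    (hφ : ∀ k : ℕ, φ (v k) = h k • v k)
    (u : ℕ → Polynomial ℂ)
    (hu : ∀ n, u n = ∑ k ∈ Finset.range (n + 1),
      (∏ j ∈ Finset.Ico k n, g (j + 1) / (h n - h j)) • v k) :
    ∀ n, γ (u n) + φ (u n) = h n • u n :=
  stmt0_general v g h hinj γ φ hγ0 hγ hφ u hu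
end

section
/- Let g, h : ℕ → ℂ with h injective. Define c_{n,k} = ∏_{j=k}^{n-1} g_{j+1}/(h_n − h_j) for 0 ≤ k ≤ n−1, c_{n,n} = 1, and ĉ_{n,k} = ∏_{j=k+1}^{n} g_j/(h_k − h_j) for 0 ≤ k ≤ n−1, ĉ_{n,n} = 1. Then for all 0 ≤ k ≤ n, Σ_{j=k}^{n} ĉ_{n,j} c_{j,k} equals 1 if k = n and equals 0 if k < n; that is, the lower triangular matrices [c_{n,k}] and [ĉ_{n,k}] are mutually inverse. -/
/-!
Both products share the factor `g (k+1) ⋯ g n`, and what is left of the `j`-th term of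
`∑ⱼ ĉ_{n,j} c_{j,k}` is the barycentric weight `∏_{i ∈ [k,n], i ≠ j} (h j - h i)⁻¹`.
These weights sum to the coefficient of `X ^ (n-k)` in the Lagrange interpolant of the
constant `1` on the `n - k + 1 ≥ 2` nodes `h k, …, h n`, which is `0`.
-/

open Finset Lagrange

theorem Lagrange.sum_nodalWeight_eq_zero {F ι : Type*} [Field F] [DecidableEq ι] {s : Finset ι}
    {v : ι → F} (hvs : Set.InjOn v s) (hs : 2 ≤ #s) : ∑ i ∈ s, nodalWeight s v i = 0 := by
  have hdeg : (1 : Polynomial F).degree < #s := by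
    rw [Polynomial.degree_one]
    exact_mod_cast (by omega : 0 < #s)
  simpa [nodalWeight, Polynomial.coeff_one, show #s - 1 ≠ 0 by omega, div_eq_mul_inv]
    using (coeff_eq_sum hvs hdeg).symm

theorem Finset.Icc_erase_eq_Ico_union_Ioc {α : Type*} [LinearOrder α] [LocallyFiniteOrder α]
    {a b c : α} (hab : a ≤ b) (hbc : b ≤ c) : (Icc a c).erase b = Ico a b ∪ Ioc b c := by
  ext x
  simp only [mem_erase, mem_Icc, mem_union, mem_Ico, mem_Ioc]
  grind

theorem Lagrange.nodalWeight_Icc {F α : Type*} [Field F] [LinearOrder α] [LocallyFiniteOrder α]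
    (v : α → F) {a b c : α} (hab : a ≤ b) (hbc : b ≤ c) :
    nodalWeight (Icc a c) v b = (∏ i ∈ Ioc b c, (v b - v i)⁻¹) * ∏ i ∈ Ico a b, (v b - v i)⁻¹ := by
  have hdisj : Disjoint (Ico a b) (Ioc b c) :=
    disjoint_left.2 fun x hx hx' => (mem_Ico.1 hx).2.not_gt (mem_Ioc.1 hx').1
  rw [nodalWeight, Icc_erase_eq_Ico_union_Ioc hab hbc, prod_union hdisj, mul_comm]

theorem Finset.prod_Ioc_mul_prod_Ico_succ {M : Type*} [CommMonoid M] (g : ℕ → M) {k j n : ℕ}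
    (hkj : k ≤ j) (hjn : j ≤ n) :
    (∏ i ∈ Ioc j n, g i) * ∏ i ∈ Ico k j, g (i + 1) = ∏ i ∈ Ioc k n, g i := by
  rw [prod_Ico_add' g k j 1, Ico_add_one_add_one_eq_Ioc, mul_comm, prod_Ioc_consecutive g hkj hjn]

theorem prod_Icc_div_mul_prod_Ico_div {F : Type*} [Field F] (g v : ℕ → F) {k j n : ℕ}
    (hkj : k ≤ j) (hjn : j ≤ n) :
    (∏ i ∈ Icc (j + 1) n, g i / (v j - v i)) * ∏ i ∈ Ico k j, g (i + 1) / (v j - v i) =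
      (∏ i ∈ Ioc k n, g i) * nodalWeight (Icc k n) v j := by
  simp only [Icc_add_one_left_eq_Ioc, div_eq_mul_inv, prod_mul_distrib]
  rw [nodalWeight_Icc v hkj hjn, ← prod_Ioc_mul_prod_Ico_succ g hkj hjn]
  ring

/-- the lower triangular matrices `[c_{n,k}]` and `[ĉ_{n,k}]`
are mutually inverse, where `c_{n,k} = ∏_{j=k}^{n-1} g_{j+1}/(h_n − h_j)`
and `ĉ_{n,k} = ∏_{j=k+1}^{n} g_j/(h_k − h_j)`. -/
theorem stmt1 (g h : ℕ → ℂ) (hinj : Function.Injective h) :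
    ∀ n k : ℕ, k ≤ n →
      ∑ j ∈ Finset.Icc k n,
          (∏ i ∈ Finset.Icc (j + 1) n, g i / (h j - h i)) *
            (∏ i ∈ Finset.Ico k j, g (i + 1) / (h j - h i)) =
        if k = n then 1 else 0 := by
  intro n k hkn
  obtain rfl | hlt := hkn.eq_or_lt
  · simp
  rw [if_neg hlt.ne, sum_congr rfl fun j hj =>
      prod_Icc_div_mul_prod_Ico_div g h (mem_Icc.1 hj).1 (mem_Icc.1 hj).2,
    ← mul_sum, sum_nodalWeight_eq_zero hinj.injOn (by rw [Nat.card_Icc]; omega), mul_zero]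
end

section
/- Let g, h, x : ℕ → ℂ with h injective and g_0 = 0. Define c_{n,k} = ∏_{j=k}^{n-1} g_{j+1}/(h_n − h_j) for 0 ≤ k ≤ n−1, c_{n,n} = 1, and the monic polynomials u_n(t) = Σ_{k=0}^{n} c_{n,k} v_k(t) where v_k(t) = ∏_{j=0}^{k-1}(t − x_j). Then for every n ≥ 1 there exist complex numbers λ_0, …, λ_{n-2} such that t·u_n(t) = u_{n+1}(t) + β_n u_n(t) + α_n u_{n-1}(t) + Σ_{k=0}^{n-2} λ_k u_k(t), where β_n = x_n + g_{n+1}/(h_n − h_{n+1}) − g_n/(h_{n-1} − h_n) and α_n = (g_n/(h_{n-1} − h_n))·( g_{n-1}/(h_{n-2} − h_n) − g_n/(h_{n-1} − h_n) + g_{n+1}/(h_{n-1} − h_{n+1}) + x_n − x_{n-1} ), with the convention that for n = 1 the term g_{n-1}/(h_{n-2} − h_n) is 0 (its numerator is g_0 = 0). -/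
/-!
Let `v_k = ∏_{j<k} (X - x_j)` and let `V_m` be the span of `v_0, …, v_{m-1}`. Since
`u_m ≡ v_m` modulo `V_m`, the `u_k` and the `v_k` with `k < m` span the same space, so it is
enough to show that `X u_n - u_{n+1} - β_n u_n - α_n u_{n-1}` lies in `V_{n-1}`. Modulo
`V_{n-1}` only the two or three top coefficients of each `u_m` survive, and
`X v_k = v_{k+1} + x_k v_k`; comparing the coefficients of `v_{n+1}, v_n, v_{n-1}` leaves a
partial-fraction identity in `h_{n-1}, h_n, h_{n+1}`.
-/

open Polynomial Finset
open Submodule (span subset_span)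

section Triangular

variable {R M : Type*} [Ring R] [AddCommGroup M] [Module R M]

theorem sum_range_smul_mem_span_image_Iio (v : ℕ → M) (d : ℕ → R) (m : ℕ) :
    ∑ k ∈ range m, d k • v k ∈ span R (v '' Set.Iio m) :=
  Submodule.sum_mem _ fun k hk =>
    Submodule.smul_mem _ _ (subset_span ⟨k, mem_range.1 hk, rfl⟩)

theorem exists_eq_sum_range_of_mem_span_image_Iio {u : ℕ → M} {m : ℕ} {y : M}
    (hy : y ∈ span R (u '' Set.Iio m)) :
    ∃ lam : ℕ → R, y = ∑ k ∈ range m, lam k • u k := by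
  obtain ⟨l, hl, rfl⟩ := Finsupp.mem_span_image_iff_linearCombination R |>.1 hy
  refine ⟨l, Finsupp.sum_of_support_subset _ (fun k hk => ?_) _ fun _ _ => zero_smul R _⟩
  simpa using hl hk

theorem span_image_Iio_le_of_sub_mem {u v : ℕ → M}
    (huv : ∀ m, u m - v m ∈ span R (v '' Set.Iio m)) (m : ℕ) :
    span R (v '' Set.Iio m) ≤ span R (u '' Set.Iio m) := by
  induction m with
  | zero => simp
  | succ m ih =>
    have hmono :=
      Submodule.span_mono (R := R) (Set.image_mono (f := u) (Set.Iio_subset_Iio m.le_succ))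
    rw [Submodule.span_le]
    rintro _ ⟨k, hk, rfl⟩
    rcases Nat.lt_succ_iff_lt_or_eq.1 hk with hk' | rfl
    · exact hmono (ih (subset_span ⟨k, hk', rfl⟩))
    · rw [← sub_sub_cancel (u k) (v k)]
      exact Submodule.sub_mem _ (subset_span ⟨k, hk, rfl⟩) (hmono (ih (huv k)))

end Triangular

section Newton

variable {R : Type*} [CommRing R]

noncomputable def newtonPoly (x : ℕ → R) (k : ℕ) : R[X] := Lagrange.nodal (range k) x

theorem X_mul_newtonPoly (x : ℕ → R) (k : ℕ) :
    X * newtonPoly x k = newtonPoly x (k + 1) + x k • newtonPoly x k := by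
  rw [newtonPoly, newtonPoly, range_add_one, Lagrange.nodal_insert_eq_nodal notMem_range_self,
    smul_eq_C_mul]
  ring

theorem X_mul_mem_span_newtonPoly {x : ℕ → R} {m : ℕ} {p : R[X]}
    (hp : p ∈ span R (newtonPoly x '' Set.Iio m)) :
    X * p ∈ span R (newtonPoly x '' Set.Iio (m + 1)) := by
  induction hp using Submodule.span_induction with
  | mem _ hq =>
    obtain ⟨k, hk, rfl⟩ := hq
    rw [X_mul_newtonPoly]
    exact add_mem (subset_span ⟨k + 1, Nat.succ_lt_succ hk, rfl⟩)
      (Submodule.smul_mem _ _ (subset_span ⟨k, Nat.lt_succ_of_lt hk, rfl⟩))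
  | zero => simp
  | add p q _ _ hp hq => rw [mul_add]; exact add_mem hp hq
  | smul a p _ hp => rw [mul_smul_comm]; exact Submodule.smul_mem _ _ hp

end Newton

section Recurrence

variable {K : Type*} [Field K] (g h x : ℕ → K)

def uCoeff (n k : ℕ) : K := ∏ j ∈ Ico k n, g (j + 1) / (h n - h j)

noncomputable def uPoly (n : ℕ) : K[X] :=
  ∑ k ∈ range (n + 1), uCoeff g h n k • newtonPoly x k

def betaCoeff (n : ℕ) : K := x n + g (n + 1) / (h n - h (n + 1)) - g n / (h (n - 1) - h n)

def alphaCoeff (n : ℕ) : K :=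
  g n / (h (n - 1) - h n) *
    (g (n - 1) / (h (n - 2) - h n) - g n / (h (n - 1) - h n)
      + g (n + 1) / (h (n - 1) - h (n + 1)) + x n - x (n - 1))

@[simp]
theorem uCoeff_self (n : ℕ) : uCoeff g h n n = 1 := by simp [uCoeff]

theorem uCoeff_add_one_self (k : ℕ) :
    uCoeff g h (k + 1) k = g (k + 1) / (h (k + 1) - h k) := by
  simp [uCoeff]

theorem uCoeff_add_two_self (k : ℕ) :
    uCoeff g h (k + 2) k =
      g (k + 1) / (h (k + 2) - h k) * (g (k + 2) / (h (k + 2) - h (k + 1))) := by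
  rw [uCoeff, prod_Ico_succ_top (by omega), prod_Ico_succ_top le_rfl, Ico_self, prod_empty,
    one_mul]

theorem betaCoeff_add_one (p : ℕ) :
    betaCoeff g h x (p + 1) = x (p + 1) + uCoeff g h (p + 1) p - uCoeff g h (p + 2) (p + 1) := by
  rw [betaCoeff, uCoeff_add_one_self, uCoeff_add_one_self, Nat.add_sub_cancel,
    ← neg_sub (h (p + 2)), ← neg_sub (h (p + 1)) (h p), div_neg, div_neg]
  ring

theorem alphaCoeff_add_one (hinj : Function.Injective h) (p : ℕ) :
    alphaCoeff g h x (p + 1) = uCoeff g h (p + 1) p * (x p - betaCoeff g h x (p + 1))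
      + g (p + 1) / (h p - h (p + 1)) * (g p / (h (p - 1) - h (p + 1))) - uCoeff g h (p + 2) p := by
  have hne : ∀ {i j : ℕ}, i ≠ j → h i - h j ≠ 0 := fun hij => sub_ne_zero.2 (hinj.ne hij)
  have h10 := hne (i := p + 1) (j := p) (by omega)
  have h20 := hne (i := p + 2) (j := p) (by omega)
  have h21 := hne (i := p + 2) (j := p + 1) (by omega)
  rw [alphaCoeff, betaCoeff_add_one, uCoeff_add_one_self, uCoeff_add_one_self, uCoeff_add_two_self,
    Nat.add_sub_cancel, show p + 1 - 2 = p - 1 by omega]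
  generalize g p / (h (p - 1) - h (p + 1)) = γ
  rw [← neg_sub (h (p + 1)) (h p), ← neg_sub (h (p + 2)) (h p)]
  field_simp
  ring

theorem uPoly_sub_sum_Ico_mem_span {N n : ℕ} (hN : N ≤ n + 1) :
    uPoly g h x n - ∑ k ∈ Ico N (n + 1), uCoeff g h n k • newtonPoly x k ∈
      span K (newtonPoly x '' Set.Iio N) := by
  rw [uPoly, ← sum_range_add_sum_Ico _ hN, add_sub_cancel_right]
  exact sum_range_smul_mem_span_image_Iio _ _ _

theorem uPoly_sub_newtonPoly_mem_span (n : ℕ) :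
    uPoly g h x n - newtonPoly x n ∈ span K (newtonPoly x '' Set.Iio n) := by
  simpa using uPoly_sub_sum_Ico_mem_span g h x n.le_succ

theorem uPoly_add_one_sub_mem_span (p : ℕ) :
    uPoly g h x (p + 1) - (newtonPoly x (p + 1) + uCoeff g h (p + 1) p • newtonPoly x p) ∈
      span K (newtonPoly x '' Set.Iio p) := by
  have := uPoly_sub_sum_Ico_mem_span g h x (N := p) (n := p + 1) (by omega)
  rw [sum_Ico_succ_top (by omega), sum_Ico_succ_top le_rfl, Ico_self, sum_empty, zero_add,
    uCoeff_self, one_smul] at this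
  convert this using 2
  abel

theorem uPoly_add_two_sub_mem_span (p : ℕ) :
    uPoly g h x (p + 2) - (newtonPoly x (p + 2)
      + uCoeff g h (p + 2) (p + 1) • newtonPoly x (p + 1)
      + uCoeff g h (p + 2) p • newtonPoly x p) ∈ span K (newtonPoly x '' Set.Iio p) := by
  have := uPoly_sub_sum_Ico_mem_span g h x (N := p) (n := p + 2) (by omega)
  rw [sum_Ico_succ_top (by omega), sum_Ico_succ_top (by omega), sum_Ico_succ_top le_rfl, Ico_self,
    sum_empty, zero_add, uCoeff_self, one_smul] at this
  convert this using 2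
  abel

/-- The product `g (p + 1) / (h p - h (p + 1)) * (g p / (h (p - 1) - h (p + 1)))` equals
`uCoeff g h (p + 1) (p - 1)` when `p ≥ 1` (the two sign changes cancel), and is `0` when `p = 0`
because `g 0 = 0`. -/
theorem X_mul_uPoly_add_one_sub_mem_span (hg0 : g 0 = 0) (p : ℕ) :
    X * uPoly g h x (p + 1) - (newtonPoly x (p + 2)
      + (x (p + 1) + uCoeff g h (p + 1) p) • newtonPoly x (p + 1)
      + (uCoeff g h (p + 1) p * x p
          + g (p + 1) / (h p - h (p + 1)) * (g p / (h (p - 1) - h (p + 1)))) • newtonPoly x p)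
      ∈ span K (newtonPoly x '' Set.Iio p) := by
  cases p with
  | zero =>
    have hu1 := uPoly_add_one_sub_mem_span g h x 0
    simp only [show Set.Iio (0 : ℕ) = ∅ by simp, Set.image_empty, Submodule.span_empty,
      Submodule.mem_bot, sub_eq_zero] at hu1 ⊢
    rw [hu1, hg0, mul_add, mul_smul_comm, X_mul_newtonPoly, X_mul_newtonPoly]
    module
  | succ q =>
    have hu2 := X_mul_mem_span_newtonPoly (uPoly_add_two_sub_mem_span g h x q)
    have hcoeff : g (q + 2) / (h (q + 1) - h (q + 2)) * (g (q + 1) / (h (q + 1 - 1) - h (q + 2)))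
        = uCoeff g h (q + 2) q := by
      rw [uCoeff_add_two_self, Nat.add_sub_cancel, ← neg_sub (h (q + 2)), ← neg_sub (h (q + 2)),
        div_neg, div_neg, neg_mul_neg, mul_comm]
    rw [hcoeff]
    convert add_mem hu2 (Submodule.smul_mem _ (uCoeff g h (q + 2) q * x q)
      (subset_span ⟨q, Nat.lt_succ_self q, rfl⟩)) using 1
    rw [mul_sub, mul_add, mul_add, mul_smul_comm, mul_smul_comm, X_mul_newtonPoly,
      X_mul_newtonPoly, X_mul_newtonPoly]
    module

theorem X_mul_uPoly_sub_recurrence_mem_span (hinj : Function.Injective h) (hg0 : g 0 = 0)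
    {n : ℕ} (hn : 1 ≤ n) :
    X * uPoly g h x n - (uPoly g h x (n + 1) + betaCoeff g h x n • uPoly g h x n
      + alphaCoeff g h x n • uPoly g h x (n - 1))
      ∈ span K (uPoly g h x '' Set.Iio (n - 1)) := by
  obtain ⟨p, rfl⟩ := Nat.exists_eq_add_of_le' hn
  rw [Nat.add_sub_cancel]
  refine span_image_Iio_le_of_sub_mem (uPoly_sub_newtonPoly_mem_span g h x) p ?_
  rw [← Submodule.Quotient.mk_eq_zero]
  have hX := (Submodule.Quotient.eq _).2 (X_mul_uPoly_add_one_sub_mem_span g h x hg0 p)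
  have h2 := (Submodule.Quotient.eq _).2 (uPoly_add_two_sub_mem_span g h x p)
  have h1 := (Submodule.Quotient.eq _).2 (uPoly_add_one_sub_mem_span g h x p)
  have h0 := (Submodule.Quotient.eq _).2 (uPoly_sub_newtonPoly_mem_span g h x p)
  simp only [Submodule.Quotient.mk_sub, Submodule.Quotient.mk_add, Submodule.Quotient.mk_smul]
    at hX h2 h1 h0 ⊢
  rw [hX, h2, h1, h0]
  match_scalars
  · ring
  · rw [betaCoeff_add_one]; ring
  · rw [alphaCoeff_add_one g h x hinj]; ring

end Recurrence

/-- expanding `t·u_n(t)` in the basis `{u_k}`, the coefficients of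
`u_n` and `u_{n-1}` are `β_n = x_n + g_{n+1}/(h_n − h_{n+1}) − g_n/(h_{n-1} − h_n)`
and `α_n = (g_n/(h_{n-1} − h_n))·(g_{n-1}/(h_{n-2} − h_n) − g_n/(h_{n-1} − h_n)
+ g_{n+1}/(h_{n-1} − h_{n+1}) + x_n − x_{n-1})`.  (For `n = 1`, truncated natural
subtraction gives `h (n-2) = h 0` and the term `g_{n-1}/(h_{n-2} − h_n) = g 0 / (h 0 - h 1) = 0`
since `g 0 = 0`, matching the stated convention.) -/
theorem stmt3 (g h x : ℕ → ℂ) (hinj : Function.Injective h) (hg0 : g 0 = 0)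
    (u : ℕ → Polynomial ℂ)
    (hu : ∀ n, u n = ∑ k ∈ Finset.range (n + 1),
      (∏ j ∈ Finset.Ico k n, g (j + 1) / (h n - h j)) •
        ∏ j ∈ Finset.range k, (X - C (x j))) :
    ∀ n, 1 ≤ n → ∃ lam : ℕ → ℂ,
      X * u n = u (n + 1)
        + (x n + g (n + 1) / (h n - h (n + 1)) - g n / (h (n - 1) - h n)) • u n
        + ((g n / (h (n - 1) - h n)) *
            (g (n - 1) / (h (n - 2) - h n) - g n / (h (n - 1) - h n)
              + g (n + 1) / (h (n - 1) - h (n + 1)) + x n - x (n - 1))) • u (n - 1)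
        + ∑ k ∈ Finset.range (n - 1), lam k • u k := by
  have hu' : u = uPoly g h x := funext hu
  subst hu'
  intro n hn
  obtain ⟨lam, hlam⟩ := exists_eq_sum_range_of_mem_span_image_Iio
    (X_mul_uPoly_sub_recurrence_mem_span g h x hinj hg0 hn)
  exact ⟨lam, eq_add_of_sub_eq' hlam⟩
end

section
/- Let z ∈ ℂ and let s, s' : ℕ → ℂ both satisfy (E3). Then the pointwise (Hadamard) product k ↦ s_k·s'_k satisfies (E5). -/
/-- A sequence satisfies (E3) if `s_{k+3} = z(s_{k+2} − s_{k+1}) + s_k`. -/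
def SatE3 (z : ℂ) (s : ℕ → ℂ) : Prop :=
  ∀ k : ℕ, s (k + 3) = z * (s (k + 2) - s (k + 1)) + s k

/-- A sequence satisfies (E5) if
`s_{k+5} = (z²−z−1)(s_{k+4} − s_{k+1}) − (z−1)(z²−z−1)(s_{k+3} − s_{k+2}) + s_k`. -/
def SatE5 (z : ℂ) (s : ℕ → ℂ) : Prop :=
  ∀ k : ℕ, s (k + 5) =
    (z ^ 2 - z - 1) * (s (k + 4) - s (k + 1))
      - (z - 1) * (z ^ 2 - z - 1) * (s (k + 3) - s (k + 2)) + s k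

/-!
The characteristic polynomial of (E3) is `(X - 1)(X² - (z - 1)X + 1)`, with roots `1, α, α⁻¹`.
Their pairwise products `1, α^{±1}, α^{±2}` are the roots of
`(X - 1)(X² - (z - 1)X + 1)(X² - (z² - 2z - 1)X + 1)`, the characteristic polynomial of (E5).
To avoid case distinctions over repeated roots, argue on windows instead: (E3) expresses
`s_{k+3}, s_{k+4}, s_{k+5}` through `s_k, s_{k+1}, s_{k+2}`, after which (E5) for the product
is a polynomial identity.
-/

theorem mul_window_e5_of_e3 {R : Type*} [CommRing R]
    {z a₀ a₁ a₂ a₃ a₄ a₅ b₀ b₁ b₂ b₃ b₄ b₅ : R}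
    (ha₃ : a₃ = z * (a₂ - a₁) + a₀) (ha₄ : a₄ = z * (a₃ - a₂) + a₁)
    (ha₅ : a₅ = z * (a₄ - a₃) + a₂)
    (hb₃ : b₃ = z * (b₂ - b₁) + b₀) (hb₄ : b₄ = z * (b₃ - b₂) + b₁)
    (hb₅ : b₅ = z * (b₄ - b₃) + b₂) :
    a₅ * b₅ = (z ^ 2 - z - 1) * (a₄ * b₄ - a₁ * b₁)
      - (z - 1) * (z ^ 2 - z - 1) * (a₃ * b₃ - a₂ * b₂) + a₀ * b₀ := by
  subst ha₅ hb₅ ha₄ hb₄ ha₃ hb₃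
  ring

/-- the Hadamard product of two solutions of (E3) satisfies (E5). -/
theorem stmt4 (z : ℂ) (s s' : ℕ → ℂ) (hs : SatE3 z s) (hs' : SatE3 z s') :
    SatE5 z (fun k => s k * s' k) := fun k =>
  mul_window_e5_of_e3 (hs k) (hs (k + 1)) (hs (k + 2)) (hs' k) (hs' (k + 1)) (hs' (k + 2))
end

section
/- Let z ∈ ℂ and let h : ℕ → ℂ satisfy (E3). Then for every fixed m ≥ 0 the difference sequence k ↦ h_k − h_{k+m} satisfies (E2). -/
/-- A sequence satisfies (E2) if `s_{k+2} = (z−1)s_{k+1} − s_k`. -/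
def SatE2 (z : ℂ) (s : ℕ → ℂ) : Prop :=
  ∀ k : ℕ, s (k + 2) = (z - 1) * s (k + 1) - s k

def e2Residual (z : ℂ) (s : ℕ → ℂ) (k : ℕ) : ℂ :=
  s (k + 2) - (z - 1) * s (k + 1) + s k

theorem satE2_iff_e2Residual_eq_zero {z : ℂ} {s : ℕ → ℂ} :
    SatE2 z s ↔ ∀ k, e2Residual z s k = 0 :=
  forall_congr' fun k => by rw [e2Residual, ← sub_eq_zero]; ring_nf

theorem e2Residual_sub_shift (z : ℂ) (s : ℕ → ℂ) (m k : ℕ) :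
    e2Residual z (fun j => s j - s (j + m)) k = e2Residual z s k - e2Residual z s (k + m) := by
  simp only [e2Residual, add_right_comm k _ m]
  ring

namespace SatE3

variable {z : ℂ} {s : ℕ → ℂ}

theorem e2Residual_succ (hs : SatE3 z s) (k : ℕ) :
    e2Residual z s (k + 1) = e2Residual z s k := by
  unfold e2Residual
  linear_combination hs k

theorem e2Residual_add (hs : SatE3 z s) (k m : ℕ) :
    e2Residual z s (k + m) = e2Residual z s k := by
  induction m with
  | zero => rfl
  | succ m ih => rw [← add_assoc, hs.e2Residual_succ, ih]

end SatE3

/-- if `h` satisfies (E3) then for every fixed `m ≥ 0` the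
difference sequence `k ↦ h_k − h_{k+m}` satisfies (E2). -/
theorem stmt5 (z : ℂ) (h : ℕ → ℂ) (hh : SatE3 z h) :
    ∀ m : ℕ, SatE2 z (fun k => h k - h (k + m)) := by
  intro m
  rw [satE2_iff_e2Residual_eq_zero]
  intro k
  rw [e2Residual_sub_shift, hh.e2Residual_add, sub_self]
end

section
/- Let z ∈ ℂ, let h : ℕ → ℂ satisfy (E3), and let p, r : ℕ → ℂ satisfy (E2) with p_0 = 1, p_1 = z−1 and r_0 = 1, r_1 = z. Then for all k ≥ 0 and m ≥ 1, h_k − h_{k+2m} = (h_{k-1+m} − h_{k+1+m})·p_{m-1}, and for all k ≥ 0 and m ≥ 0, h_k − h_{k+2m+1} = (h_{k+m} − h_{k+m+1})·r_m. -/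
/-! The characteristic polynomial of (E3) is `(X - 1) (X² - (z - 1) X + 1)`, so
`h (k + 2) - (z - 1) h (k + 1) + h k` does not depend on `k`. Subtracting two of these
invariants shows that the window differences `W_N k = h k - h (k + N)` obey the (E2)-recurrence
`W_{N+4} k = (z - 1) W_{N+2} (k + 1) - W_N (k + 2)` jointly in the length and the start.
A two-step induction on the half-length then matches `W_{2m+2} k` with `p m` and `W_{2m+1} k`
with `r m`, since both sides satisfy the same recurrence and agree for `m = 0, 1`. -/

theorem window_eq_center_mul {R : Type*} [CommRing R] {t : R} {W : ℕ → ℕ → R} {q : ℕ → R}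
    (hW : ∀ m k, W (m + 2) k = t * W (m + 1) (k + 1) - W m (k + 2))
    (hq : ∀ m, q (m + 2) = t * q (m + 1) - q m) (hq0 : q 0 = 1)
    (hW1 : ∀ k, W 1 k = W 0 (k + 1) * q 1) :
    ∀ m k, W m k = W 0 (k + m) * q m := by
  intro m
  induction m using Nat.twoStepInduction with
  | zero => simp [hq0]
  | one => exact hW1
  | more m ih₀ ih₁ =>
    intro k
    rw [hW, ih₁, ih₀, hq]
    ring_nf

namespace SatE3

variable {z : ℂ} {h : ℕ → ℂ}

theorem invariant_add (hh : SatE3 z h) (k n : ℕ) :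
    h (k + n + 2) - (z - 1) * h (k + n + 1) + h (k + n) =
      h (k + 2) - (z - 1) * h (k + 1) + h k := by
  induction n with
  | zero => rfl
  | succ n ih =>
    rw [← ih, show k + (n + 1) + 2 = k + n + 3 by ring, show k + (n + 1) + 1 = k + n + 2 by ring,
      ← add_assoc, hh]
    ring

theorem window_recurrence (hh : SatE3 z h) (N k : ℕ) :
    h k - h (k + N + 4) = (z - 1) * (h (k + 1) - h (k + N + 3)) - (h (k + 2) - h (k + N + 2)) := by
  have := hh.invariant_add k (N + 2)
  ring_nf at this ⊢
  linear_combination -this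

theorem sub_eq_even (hh : SatE3 z h) {p : ℕ → ℂ} (hp : SatE2 z p) (hp0 : p 0 = 1)
    (hp1 : p 1 = z - 1) (k m : ℕ) :
    h k - h (k + 2 * (m + 1)) = (h (k + m) - h (k + m + 2)) * p m := by
  refine window_eq_center_mul (W := fun m k => h k - h (k + 2 * (m + 1))) (fun m k => ?_) hp hp0
    (fun k => ?_) m k
  · have := hh.window_recurrence (2 * m + 2) k
    ring_nf at this ⊢
    exact this
  · have := hh.window_recurrence 0 k
    rw [hp1]
    ring_nf at this ⊢
    linear_combination this

theorem sub_eq_odd (hh : SatE3 z h) {r : ℕ → ℂ} (hr : SatE2 z r) (hr0 : r 0 = 1)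
    (hr1 : r 1 = z) (k m : ℕ) :
    h k - h (k + 2 * m + 1) = (h (k + m) - h (k + m + 1)) * r m := by
  refine window_eq_center_mul (W := fun m k => h k - h (k + 2 * m + 1)) (fun m k => ?_) hr hr0
    (fun k => ?_) m k
  · have := hh.window_recurrence (2 * m + 1) k
    ring_nf at this ⊢
    exact this
  · have := hh k
    rw [hr1]
    ring_nf at this ⊢
    linear_combination -this

end SatE3

/-- for `h` a solution of (E3):
`h_k − h_{k+2m} = (h_{k−1+m} − h_{k+1+m})·p_{m−1}` for `m ≥ 1` (here stated
with `m+1` in place of `m`), and `h_k − h_{k+2m+1} = (h_{k+m} − h_{k+m+1})·r_m`,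
where `p, r` solve (E2) with `p_0 = 1, p_1 = z−1` and `r_0 = 1, r_1 = z`. -/
theorem stmt9 (z : ℂ) (h : ℕ → ℂ) (hh : SatE3 z h)
    (p r : ℕ → ℂ) (hp : SatE2 z p) (hr : SatE2 z r)
    (hp0 : p 0 = 1) (hp1 : p 1 = z - 1) (hr0 : r 0 = 1) (hr1 : r 1 = z) :
    (∀ k m : ℕ, h k - h (k + 2 * (m + 1)) = (h (k + m) - h (k + m + 2)) * p m) ∧
    (∀ k m : ℕ, h k - h (k + 2 * m + 1) = (h (k + m) - h (k + m + 1)) * r m) :=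
  ⟨hh.sub_eq_even hp hp0 hp1, hh.sub_eq_odd hr hr0 hr1⟩
end

section
/- Let z ∈ ℂ, let h : ℕ → ℂ satisfy (E3), and let p, r : ℕ → ℂ satisfy (E2) with p_0 = 1, p_1 = z−1 and r_0 = 1, r_1 = z. If p_m ≠ 0 and r_m ≠ 0 for all m ≥ 0, and h_k ≠ h_{k+1} and h_k ≠ h_{k+2} for all k ≥ 0, then h is injective, i.e. h_k ≠ h_n whenever k ≠ n. -/
namespace SatE3

variable {z : ℂ} {h : ℕ → ℂ}

theorem invariant (hh : SatE3 z h) (n : ℕ) :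
    h (n + 2) - (z - 1) * h (n + 1) + h n = h 2 - (z - 1) * h 1 + h 0 := by
  induction n with
  | zero => rfl
  | succ n ih => rw [← ih]; linear_combination (norm := ring_nf) hh n

/-- With `c` fixed, `D m k := h (k + 2m + c) - h k` satisfies
`D (m + 2) k = (z - 1) D (m + 1) (k + 1) - D m (k + 2)`, the (E2) recurrence. -/
theorem sub_eq_mul_sub {s : ℕ → ℂ} (hh : SatE3 z h) (hs : SatE2 z s) (hs0 : s 0 = 1) (c : ℕ)
    (hbase : ∀ k, h (k + 2 + c) - h k = s 1 * (h (k + 1 + c) - h (k + 1))) (m : ℕ) :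
    ∀ k, h (k + 2 * m + c) - h k = s m * (h (k + m + c) - h (k + m)) := by
  induction m using Nat.twoStepInduction with
  | zero => intro k; simp [hs0]
  | one => simpa using hbase
  | more m ihm ihm1 =>
    intro k
    have hinv := (hh.invariant (k + 2 * m + c + 2)).trans (hh.invariant k).symm
    linear_combination (norm := ring_nf) (z - 1) * ihm1 (k + 1) - ihm (k + 2) + hinv
      - (h (k + m + 2 + c) - h (k + m + 2)) * hs m

theorem sub_eq_mul_sub_odd {r : ℕ → ℂ} (hh : SatE3 z h) (hr : SatE2 z r) (hr0 : r 0 = 1)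
    (hr1 : r 1 = z) (m k : ℕ) :
    h (k + 2 * m + 1) - h k = r m * (h (k + m + 1) - h (k + m)) :=
  hh.sub_eq_mul_sub hr hr0 1 (fun k ↦ by rw [hr1]; linear_combination hh k) m k

theorem sub_eq_mul_sub_even {p : ℕ → ℂ} (hh : SatE3 z h) (hp : SatE2 z p) (hp0 : p 0 = 1)
    (hp1 : p 1 = z - 1) (m k : ℕ) :
    h (k + 2 * m + 2) - h k = p m * (h (k + m + 2) - h (k + m)) :=
  hh.sub_eq_mul_sub hp hp0 2
    (fun k ↦ by rw [hp1]; linear_combination (norm := ring_nf) hh k + hh (k + 1)) m k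

end SatE3

/-- if `p_m ≠ 0` and `r_m ≠ 0` for all `m`, and consecutive
differences `h_k − h_{k+1}` and `h_k − h_{k+2}` never vanish, then `h` is
injective. -/
theorem stmt10 (z : ℂ) (h : ℕ → ℂ) (hh : SatE3 z h)
    (p r : ℕ → ℂ) (hp : SatE2 z p) (hr : SatE2 z r)
    (hp0 : p 0 = 1) (hp1 : p 1 = z - 1) (hr0 : r 0 = 1) (hr1 : r 1 = z)
    (hpne : ∀ m : ℕ, p m ≠ 0) (hrne : ∀ m : ℕ, r m ≠ 0)
    (h1 : ∀ k : ℕ, h k ≠ h (k + 1)) (h2 : ∀ k : ℕ, h k ≠ h (k + 2)) :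
    Function.Injective h := by
  refine .of_lt_imp_ne fun k n hkn ↦ ?_
  obtain ⟨t, rfl⟩ := Nat.exists_eq_add_of_lt hkn
  rw [ne_comm, ← sub_ne_zero]
  obtain ⟨m, rfl | rfl⟩ := Nat.even_or_odd' t
  · rw [hh.sub_eq_mul_sub_odd hr hr0 hr1]
    exact mul_ne_zero (hrne m) (sub_ne_zero.2 (h1 _).symm)
  · rw [show k + (2 * m + 1) + 1 = k + 2 * m + 2 by ring, hh.sub_eq_mul_sub_even hp hp0 hp1]
    exact mul_ne_zero (hpne m) (sub_ne_zero.2 (h2 _).symm)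
end

section
/- Let a_0, a_1, a_2, d_1, d_2 ∈ ℂ with a_1 + k·a_2 ≠ 0 for all integers k ≥ 0. Define h_k = a_0 + a_1·k + a_2·k(k−1) and g_k = d_1·k + d_2·k(k−1) for k ≥ 0 (so h is injective), and let u_n(t) = t^n + Σ_{k=0}^{n-1} ( ∏_{j=k}^{n-1} g_{j+1}/(h_n − h_j) )·t^k. Then for every n ≥ 0 the polynomial u_n satisfies the second-order differential equation (d_2·t + a_2·t²)·u_n''(t) + (d_1 + a_1·t)·u_n'(t) + a_0·u_n(t) = h_n·u_n(t). -/
open Polynomial Finset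

/-!
The operator `L u = (d₂t + a₂t²)u'' + (d₁ + a₁t)u' + a₀u` lowers degrees by at most one:
`L tᵏ = g_k t^(k-1) + h_k tᵏ`. Hence `L (Σ c_k tᵏ) = h_n Σ c_k tᵏ` as soon as
`(h_n - h_k) c_k = g_(k+1) c_(k+1)` for `k < n`, and the coefficients of `u_n` are the solution of
this recurrence normalised by `c_n = 1`; it exists because
`h_n - h_k = (n - k)(a₁ + (n+k-1)a₂) ≠ 0`.
-/

namespace Polynomial

section CommRing

variable {R : Type*} [CommRing R]

theorem map_sum_C_mul_X_pow_eq_C_mul_of_recurrence {L : R[X] →ₗ[R] R[X]} {g h c : ℕ → R}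
    {n : ℕ} (hL : ∀ k, L (X ^ k) = C (g k) * X ^ (k - 1) + C (h k) * X ^ k) (hg : g 0 = 0)
    (hc : ∀ k < n, (h n - h k) * c k = g (k + 1) * c (k + 1)) :
    L (∑ k ∈ range (n + 1), C (c k) * X ^ k)
      = C (h n) * ∑ k ∈ range (n + 1), C (c k) * X ^ k := by
  have expand : L (∑ k ∈ range (n + 1), C (c k) * X ^ k)
      = ∑ k ∈ range (n + 1), C (c k * g k) * X ^ (k - 1)
        + ∑ k ∈ range (n + 1), C (c k * h k) * X ^ k := by
    simp only [map_sum, ← smul_eq_C_mul, map_smul, hL, smul_add, sum_add_distrib]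
    simp only [smul_eq_C_mul, C_mul, mul_assoc]
  have lowering : ∑ k ∈ range (n + 1), C (c k * g k) * X ^ (k - 1)
      = ∑ k ∈ range (n + 1), C ((h n - h k) * c k) * X ^ k := by
    rw [sum_range_succ', sum_range_succ, hg, sub_self]
    simp only [mul_zero, zero_mul, map_zero, add_zero, Nat.add_sub_cancel]
    exact sum_congr rfl fun k hk => by rw [hc k (mem_range.mp hk), mul_comm (c _)]
  rw [expand, lowering, ← sum_add_distrib, mul_sum]
  exact sum_congr rfl fun k _ => by
    rw [← add_mul, ← C_add, ← mul_assoc, ← C_mul]; congr 2; ring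

noncomputable def hypergeometricOp (a0 a1 a2 d1 d2 : R) : R[X] →ₗ[R] R[X] :=
  LinearMap.mulLeft R (C d2 * X + C a2 * X ^ 2) ∘ₗ derivative ∘ₗ derivative
    + LinearMap.mulLeft R (C d1 + C a1 * X) ∘ₗ derivative + LinearMap.mulLeft R (C a0)

theorem hypergeometricOp_apply (a0 a1 a2 d1 d2 : R) (p : R[X]) :
    hypergeometricOp a0 a1 a2 d1 d2 p = (C d2 * X + C a2 * X ^ 2) * derivative (derivative p)
      + (C d1 + C a1 * X) * derivative p + C a0 * p :=
  rfl

theorem hypergeometricOp_X_pow (a0 a1 a2 d1 d2 : R) (k : ℕ) :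
    hypergeometricOp a0 a1 a2 d1 d2 (X ^ k)
      = C (d1 * k + d2 * k * (k - 1)) * X ^ (k - 1)
        + C (a0 + a1 * k + a2 * k * (k - 1)) * X ^ k := by
  rw [hypergeometricOp_apply]
  rcases k with _ | _ | k
  · simp
  · simp only [zero_add, pow_one, derivative_X, derivative_one, mul_zero, mul_one, Nat.cast_one,
      sub_self, add_zero, tsub_self, pow_zero, map_add]
    ring
  · rw [derivative_X_pow_succ, derivative_C_mul, derivative_X_pow_succ, Nat.add_sub_cancel]
    simp only [C_add, C_mul, map_natCast, C_sub, C_1]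
    push_cast
    ring

end CommRing

end Polynomial

theorem mul_prod_Ico_div_eq {K : Type*} [Field K] {a b : ℕ → K} {k n : ℕ} (hkn : k < n)
    (hb : b k ≠ 0) :
    b k * ∏ j ∈ Ico k n, a j / b j = a k * ∏ j ∈ Ico (k + 1) n, a j / b j := by
  rw [prod_eq_prod_Ico_succ_bot hkn, ← mul_assoc, mul_div_cancel₀ _ hb]

theorem quadratic_sub_quadratic_ne_zero {K : Type*} [Field K] [CharZero K] {a0 a1 a2 : K}
    (ha : ∀ k : ℕ, a1 + (k : K) * a2 ≠ 0) {k n : ℕ} (hkn : k < n) :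
    a0 + a1 * n + a2 * n * (n - 1) - (a0 + a1 * k + a2 * k * (k - 1)) ≠ 0 := by
  have hcast : ((n + k - 1 : ℕ) : K) = n + k - 1 := by
    rw [Nat.cast_sub (by omega)]; push_cast; rfl
  have factor : a0 + a1 * n + a2 * n * (n - 1) - (a0 + a1 * k + a2 * k * (k - 1))
      = (n - k) * (a1 + ((n + k - 1 : ℕ) : K) * a2) := by
    rw [hcast]; ring
  rw [factor]
  exact mul_ne_zero (sub_ne_zero.mpr (by exact_mod_cast hkn.ne')) (ha _)

/-- with `h_k = a_0 + a_1 k + a_2 k(k−1)`,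
`g_k = d_1 k + d_2 k(k−1)` and `a_1 + k a_2 ≠ 0` for all `k ≥ 0` (so that `h`
is injective), the monic polynomials
`u_n(t) = t^n + Σ_{k<n} (∏_{j=k}^{n-1} g_{j+1}/(h_n − h_j)) t^k`
satisfy the second-order differential equation
`(d_2 t + a_2 t²)u_n'' + (d_1 + a_1 t)u_n' + a_0 u_n = h_n u_n`. -/
theorem stmt18 (a0 a1 a2 d1 d2 : ℂ)
    (ha : ∀ k : ℕ, a1 + (k : ℂ) * a2 ≠ 0)
    (h g : ℕ → ℂ)
    (hh : ∀ k : ℕ, h k = a0 + a1 * (k : ℂ) + a2 * (k : ℂ) * ((k : ℂ) - 1))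
    (hg : ∀ k : ℕ, g k = d1 * (k : ℂ) + d2 * (k : ℂ) * ((k : ℂ) - 1))
    (u : ℕ → Polynomial ℂ)
    (hu : ∀ n, u n = X ^ n + ∑ k ∈ Finset.range n,
      (∏ j ∈ Finset.Ico k n, g (j + 1) / (h n - h j)) • X ^ k) :
    ∀ n : ℕ,
      (C d2 * X + C a2 * X ^ 2) * derivative (derivative (u n))
        + (C d1 + C a1 * X) * derivative (u n) + C a0 * u n = C (h n) * u n := by
  intro n
  have h_ne : ∀ k < n, h n - h k ≠ 0 := fun k hk => by
    rw [hh, hh]; exact quadratic_sub_quadratic_ne_zero ha hk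
  set c : ℕ → ℂ := fun k => ∏ j ∈ Ico k n, g (j + 1) / (h n - h j)
  have hu_sum : u n = ∑ k ∈ range (n + 1), C (c k) * X ^ k := by
    simp [hu, sum_range_succ, c, smul_eq_C_mul, add_comm]
  rw [← hypergeometricOp_apply, hu_sum]
  refine map_sum_C_mul_X_pow_eq_C_mul_of_recurrence (g := g) (h := h) (fun k => ?_) (by simp [hg])
    fun k hk => mul_prod_Ico_div_eq (a := fun j => g (j + 1)) (b := fun j => h n - h j) hk
      (h_ne k hk)
  rw [hypergeometricOp_X_pow, hg, hh]
end
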